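/- The number of 2-Motzkin paths of length n-1 with exactly k-1 up steps is (2^(n-2k+1)/k)·C(n-1,2k-2)·C(2k-2,k-1). -/

import Mathlib

/-- Steps of a 2-Motzkin path: up, down, red horizontal, blue horizontal. -/
inductive Step2 where
  | up : Step2
  | down : Step2
  | red : Step2
  | blue : Step2
deriving DecidableEq

/-- The height change of a step. -/
def Step2.h : Step2 → ℤ
  | .up => 1
  | .down => -1
  | .red => 0
  | .blue => 0

/-- A list of steps is a 2-Motzkin path if it ends at height 0 and
no prefix goes below the x-axis. -/
def IsTwoMotzkin (p : List Step2) : Prop :=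
  (p.map Step2.h).sum = 0 ∧ ∀ q : List Step2, q <+: p → 0 ≤ (q.map Step2.h).sum

/-! A 2-Motzkin path is a free shuffle of a Dyck path (its up and down steps) with a word in
two colours (its horizontal steps), since only the vertical steps change the height. With `j` up
steps and length `m` there are `C(m, 2j)` ways to place the `2j` vertical steps, `catalan j` Dyck
paths to put on them and `2 ^ (m - 2j)` colourings of the remaining steps; the formula follows
from `C(2j, j) = (j + 1) * catalan j`. -/

open List

section ListCount

variable {γ : Type*}

instance (m : ℕ) (P : List γ → Prop) [Finite γ] : Finite {l : List γ // l.length = m ∧ P l} :=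
  ((List.finite_length_eq γ m).subset fun _ h => h.1).to_subtype

theorem card_list_length_zero (P : List γ → Prop) [Decidable (P [])] :
    Nat.card {l : List γ // l.length = 0 ∧ P l} = if P [] then 1 else 0 := by
  simp only [length_eq_zero_iff]
  split_ifs with h
  · exact Nat.card_eq_one_iff_exists.mpr ⟨⟨[], rfl, h⟩, fun l => Subtype.ext l.2.1⟩
  · exact Nat.card_eq_zero.mpr (.inl ⟨fun l => h (l.2.1 ▸ l.2.2)⟩)

theorem card_list_length_succ [Fintype γ] (m : ℕ) (P : List γ → Prop) :
    Nat.card {l : List γ // l.length = m + 1 ∧ P l} =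
      ∑ x, Nat.card {l : List γ // l.length = m ∧ P (x :: l)} := by
  rw [← Nat.card_sigma]
  refine (Nat.card_eq_of_bijective
    (fun l : Σ x, {l : List γ // l.length = m ∧ P (x :: l)} =>
      (⟨l.1 :: l.2.1, by simp [l.2.2.1], l.2.2.2⟩ : {l : List γ // l.length = m + 1 ∧ P l}))
    ⟨?_, ?_⟩).symm
  · rintro ⟨x, l, hl⟩ ⟨y, l', hl'⟩ h
    simp only [Subtype.mk.injEq, cons.injEq] at h
    obtain ⟨rfl, rfl⟩ := h
    rfl
  · rintro ⟨_ | ⟨x, l⟩, hl, hP⟩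
    · simp at hl
    · exact ⟨⟨x, l, by simpa using hl, hP⟩, rfl⟩

end ListCount

theorem card_list_sum_filterMap_getLeft {α β : Type*} [Fintype α] [Fintype β]
    (P : List α → Prop) (m r : ℕ) :
    Nat.card {l : List (α ⊕ β) // l.length = m ∧
        (l.filterMap Sum.getLeft?).length = r ∧ P (l.filterMap Sum.getLeft?)} =
      m.choose r * Nat.card {u : List α // u.length = r ∧ P u} * Fintype.card β ^ (m - r) := by
  classical
  induction m generalizing P r with
  | zero => cases r <;> simp only [card_list_length_zero] <;> simp
  | succ m ih =>
    rw [card_list_length_succ, Fintype.sum_sum_type]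
    simp only [filterMap_cons, Sum.getLeft?_inl, Sum.getLeft?_inr, length_cons, ih,
      Finset.sum_const, Finset.card_univ, smul_eq_mul]
    cases r with
    | zero => simp [pow_succ', mul_left_comm]
    | succ r =>
      simp only [Nat.add_right_cancel_iff]
      have hinl (x : α) := ih (fun u => P (x :: u)) r
      rw [Finset.sum_congr rfl fun x _ => hinl x, ← Finset.sum_mul, ← Finset.mul_sum,
        ← card_list_length_succ, Nat.choose_succ_succ', Nat.add_sub_add_right]
      rcases lt_or_ge r m with h | h
      · rw [show m - r = m - (r + 1) + 1 by omega]
        ring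
      · rw [Nat.choose_eq_zero_of_lt (by omega : m < r + 1)]
        ring

theorem forall_prefix_filterMap_iff {γ δ : Type*} (f : γ → Option δ) (Q : List δ → Prop)
    (l : List γ) : (∀ q, q <+: l.filterMap f → Q q) ↔ ∀ q, q <+: l → Q (q.filterMap f) := by
  refine ⟨fun h q hq => h _ (hq.filterMap f), ?_⟩
  rintro h q ⟨r, hr⟩
  obtain ⟨l₁, l₂, rfl, rfl, -⟩ := filterMap_eq_append_iff.mp hr.symm
  exact h l₁ (prefix_append _ _)

instance : Fintype DyckStep := ⟨{.U, .D}, fun s => by cases s <;> simp⟩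

theorem DyckWord.exists_toList_eq_iff (w : List DyckStep) :
    (∃ d : DyckWord, d.toList = w) ↔
      w.count .U = w.count .D ∧ ∀ q, q <+: w → q.count .D ≤ q.count .U := by
  constructor
  · rintro ⟨d, rfl⟩
    exact ⟨d.count_U_eq_count_D, fun q hq => prefix_iff_eq_take.mp hq ▸ d.count_D_le_count_U _⟩
  · rintro ⟨hUD, hpre⟩
    exact ⟨⟨w, hUD, fun i => hpre _ (take_prefix i w)⟩, rfl⟩

theorem card_dyckWord_toList_length_eq (j : ℕ) :
    Nat.card {u : List DyckStep // u.length = 2 * j ∧ ∃ d : DyckWord, d.toList = u} =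
      catalan j := by
  rw [← DyckWord.card_dyckWord_semilength_eq_catalan, ← Nat.card_eq_fintype_card]
  refine (Nat.card_eq_of_bijective (fun d => ⟨d.1.toList,
    by rw [← d.1.two_mul_semilength_eq_length, d.2], d.1, rfl⟩) ⟨?_, ?_⟩).symm
  · exact fun d d' h => Subtype.ext (DyckWord.ext (congrArg Subtype.val h))
  · rintro ⟨_, hl, d, rfl⟩
    refine ⟨⟨d, ?_⟩, rfl⟩
    have := d.two_mul_semilength_eq_length
    omega

namespace Step2

def equivSum : Step2 ≃ DyckStep ⊕ Bool where
  toFun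
    | up => .inl .U
    | down => .inl .D
    | red => .inr true
    | blue => .inr false
  invFun
    | .inl .U => up
    | .inl .D => down
    | .inr true => red
    | .inr false => blue
  left_inv s := by cases s <;> rfl
  right_inv x := by rcases x with (_ | _) | (_ | _) <;> rfl

def dyckPart (p : List Step2) : List DyckStep :=
  p.filterMap fun s => (equivSum s).getLeft?

@[simp] theorem dyckPart_cons_up (p : List Step2) : dyckPart (up :: p) = .U :: dyckPart p := rfl
@[simp] theorem dyckPart_cons_down (p : List Step2) : dyckPart (down :: p) = .D :: dyckPart p := rfl
@[simp] theorem dyckPart_cons_red (p : List Step2) : dyckPart (red :: p) = dyckPart p := rfl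
@[simp] theorem dyckPart_cons_blue (p : List Step2) : dyckPart (blue :: p) = dyckPart p := rfl

theorem sum_map_h_eq_count_dyckPart (p : List Step2) :
    (p.map h).sum = ((dyckPart p).count .U : ℤ) - (dyckPart p).count .D := by
  induction p with
  | nil => rfl
  | cons s p ih =>
    cases s <;>
      simp only [map_cons, sum_cons, h, ih, dyckPart_cons_up, dyckPart_cons_down,
        dyckPart_cons_red, dyckPart_cons_blue, count_cons_self, count_cons_of_ne, ne_eq,
        reduceCtorEq, not_false_eq_true, Nat.cast_add, Nat.cast_one, zero_add] <;>
      ring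

theorem count_up_eq_count_U_dyckPart (p : List Step2) : p.count up = (dyckPart p).count .U := by
  induction p with
  | nil => rfl
  | cons s p ih => cases s <;> simp [ih]

theorem isTwoMotzkin_iff_exists_dyckWord (p : List Step2) :
    IsTwoMotzkin p ↔ ∃ d : DyckWord, d.toList = dyckPart p := by
  rw [DyckWord.exists_toList_eq_iff, dyckPart, forall_prefix_filterMap_iff]
  simp only [IsTwoMotzkin, sum_map_h_eq_count_dyckPart, dyckPart]
  exact and_congr (by omega) (forall₂_congr fun q _ => by omega)

theorem isTwoMotzkin_and_count_up_iff (p : List Step2) (j : ℕ) :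
    IsTwoMotzkin p ∧ p.count up = j ↔
      (dyckPart p).length = 2 * j ∧ ∃ d : DyckWord, d.toList = dyckPart p := by
  rw [isTwoMotzkin_iff_exists_dyckWord, count_up_eq_count_U_dyckPart]
  constructor
  · rintro ⟨⟨d, hd⟩, rfl⟩
    exact ⟨hd ▸ d.two_mul_semilength_eq_length.symm, d, hd⟩
  · rintro ⟨hl, d, hd⟩
    have := d.two_mul_semilength_eq_length
    rw [hd] at this
    exact ⟨⟨d, hd⟩, by rw [← hd, ← DyckWord.semilength]; omega⟩

end Step2

theorem card_twoMotzkin_length_count_up (m j : ℕ) :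
    Nat.card {p : List Step2 // p.length = m ∧ IsTwoMotzkin p ∧ p.count .up = j} =
      m.choose (2 * j) * catalan j * 2 ^ (m - 2 * j) := by
  rw [← card_dyckWord_toList_length_eq, ← Fintype.card_bool, ← card_list_sum_filterMap_getLeft]
  refine Nat.card_congr ((Equiv.listEquivOfEquiv Step2.equivSum).subtypeEquiv fun p => ?_)
  simp only [Step2.isTwoMotzkin_and_count_up_iff, Equiv.listEquivOfEquiv, Equiv.coe_fn_mk,
    length_map, filterMap_map, Step2.dyckPart]
  rfl

theorem card_twoMotzkin_up_general (n k : ℕ) (hk : 1 ≤ k) :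
    (Nat.card {p : List Step2 //
        p.length = n - 1 ∧ IsTwoMotzkin p ∧ p.count Step2.up = k - 1} : ℚ) =
      (2 ^ (n + 1 - 2 * k) / k : ℚ) * (n - 1).choose (2 * k - 2) * (2 * k - 2).choose (k - 1) := by
  rw [card_twoMotzkin_length_count_up, show 2 * k - 2 = 2 * (k - 1) by omega,
    show n + 1 - 2 * k = n - 1 - 2 * (k - 1) by omega, ← Nat.centralBinom_eq_two_mul_choose,
    ← succ_mul_catalan_eq_centralBinom, Nat.sub_add_cancel hk]
  push_cast
  field_simp

/-- The number of 2-Motzkin paths of length `n-1` with exactly `k-1` up steps is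
`(2^(n-2k+1)/k)·C(n-1,2k-2)·C(2k-2,k-1)`. -/
theorem card_twoMotzkin_up (n k : ℕ) (hn : 1 ≤ n) (hk : 1 ≤ k) (h : 2 * k - 1 ≤ n) :
    (Nat.card {p : List Step2 //
        p.length = n - 1 ∧ IsTwoMotzkin p ∧ p.count Step2.up = k - 1} : ℚ) =
      (2 ^ (n + 1 - 2 * k) / k : ℚ) * (n - 1).choose (2 * k - 2) * (2 * k - 2).choose (k - 1) :=
  card_twoMotzkin_up_general n k hk
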